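/- arXiv:1901.09413 — 2 statements merged into one kernel-verified Lean document; each statement's English description precedes it below -/
import Mathlib

section
/- Let P be the orthogonal projection onto a uniformly random M-dimensional subspace of ℝ^N, and let v ∈ ℝ^N be a fixed nonzero vector. Then for any 0 < ε < 1, the probability that ‖Pv‖₂ ≥ √(1+ε)·√(M/N)·‖v‖₂ is at most exp(−Mε²/12). -/
open MeasureTheory

/-- `P` is an orthogonal projection: idempotent and self-adjoint. -/
def IsOrthogonalProjection {N : ℕ}
    (P : EuclideanSpace ℝ (Fin N) →ₗ[ℝ] EuclideanSpace ℝ (Fin N)) : Prop :=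
  (∀ v, P (P v) = P v) ∧
  (∀ u v : EuclideanSpace ℝ (Fin N), inner ℝ (P u) v = (inner ℝ u (P v) : ℝ))

/-- `ν` is the uniform (rotation-invariant) probability distribution on the unit sphere
of `ℝ^N`. -/
def IsUniformOnUnitSphere {N : ℕ} (ν : Measure (EuclideanSpace ℝ (Fin N))) : Prop :=
  IsProbabilityMeasure ν ∧
  ν {o : EuclideanSpace ℝ (Fin N) | ‖o‖ ≠ 1} = 0 ∧
  ∀ g : EuclideanSpace ℝ (Fin N) ≃ₗᵢ[ℝ] EuclideanSpace ℝ (Fin N), Measure.map g ν = ν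

/-- Norm of the first `M` coordinates of a vector in `ℝ^N` (`M ≤ N`). -/
noncomputable def normFirstCoords {N : ℕ} (M : ℕ) (hMN : M ≤ N)
    (o : EuclideanSpace ℝ (Fin N)) : ℝ :=
  Real.sqrt (∑ i : Fin M, (o (Fin.castLE hMN i)) ^ 2)

/-!
Write `A = ∑_{l < M} o_l²` for a uniform unit vector `o`. Rotation invariance determines the
moments of `A`: the integral of `o_i o_j A^m` along the rotation by `θ` in the `(i, j)`-plane
(`i < M ≤ j`) does not depend on `θ`, and summing its derivative at `θ = 0` over all such pairs
gives `(N + 2m) E[A^(m+1)] = (M + 2m) E[A^m]`, so `E[A^k] = ∏_{j<k} (M + 2j) / (N + 2j)`.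
Markov's inequality for `A^k` bounds `ℙ(A ≥ (1 + ε) M / N)` by
`exp (k (k - 1) / M - k log (1 + ε))`, and `k = ⌈M log (1 + ε) / 2⌉` together with
`log (1 + ε) ≥ 2ε / 3` makes this at most `exp (-M ε² / 12)`.
-/

open Real Finset

section CompactSupport

variable {X : Type*} [TopologicalSpace X] [MeasurableSpace X] [OpensMeasurableSpace X]
  {ν : Measure X} [IsFiniteMeasure ν] {K : Set X}

theorem Continuous.integrable_of_ae_mem_compact {f : X → ℝ} (hf : Continuous f)
    (hK : IsCompact K) (hνK : ∀ᵐ x ∂ν, x ∈ K) : Integrable f ν := by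
  obtain ⟨C, hC⟩ := hK.exists_bound_of_continuousOn hf.continuousOn
  exact .of_bound hf.aestronglyMeasurable C (hνK.mono hC)

theorem integral_deriv_eq_zero_of_integral_const (hK : IsCompact K) (hνK : ∀ᵐ x ∂ν, x ∈ K)
    {F F' : ℝ → X → ℝ} (hF : Continuous (Function.uncurry F))
    (hF' : Continuous (Function.uncurry F')) (hderiv : ∀ θ x, HasDerivAt (F · x) (F' θ x) θ)
    (hconst : ∀ θ, ∫ x, F θ x ∂ν = ∫ x, F 0 x ∂ν) :
    ∫ x, F' 0 x ∂ν = 0 := by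
  have hcont : ∀ θ, Continuous (F θ) := fun θ => hF.comp (Continuous.prodMk_right θ)
  -- the derivative is bounded on the compact set `[-1, 1] × K`, which carries `ν`
  obtain ⟨C, hC⟩ :=
    ((isCompact_closedBall (0 : ℝ) 1).prod hK).exists_bound_of_continuousOn hF'.continuousOn
  have hbound : ∀ᵐ x ∂ν, ∀ θ ∈ Metric.ball (0 : ℝ) 1, ‖F' θ x‖ ≤ C :=
    hνK.mono fun x hx θ hθ => hC (θ, x) ⟨Metric.ball_subset_closedBall hθ, hx⟩
  have hdiff := (hasDerivAt_integral_of_dominated_loc_of_deriv_le (Metric.ball_mem_nhds 0 one_pos)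
    (.of_forall fun θ => (hcont θ).aestronglyMeasurable)
    ((hcont 0).integrable_of_ae_mem_compact hK hνK)
    (hF'.comp (Continuous.prodMk_right 0)).aestronglyMeasurable hbound (integrable_const C)
    (.of_forall fun x θ _ => hderiv θ x)).2
  rw [funext hconst] at hdiff
  exact hdiff.unique (hasDerivAt_const _ _)

end CompactSupport

theorem exists_nat_mul_sub_one_le {a : ℝ} (ha : 0 ≤ a) :
    ∃ k : ℕ, (k : ℝ) * (k - 1) ≤ 2 * a * k - a ^ 2 := by
  refine ⟨⌈a⌉₊, ?_⟩
  have hlo := Nat.le_ceil a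
  have hhi := Nat.ceil_lt_add_one ha
  nlinarith

theorem prod_add_div_add_le_pow_mul_exp {M N : ℝ} (hM : 0 < M) (hN : 0 < N) (k : ℕ) :
    ∏ j ∈ range k, (M + 2 * j) / (N + 2 * j) ≤ (M / N) ^ k * exp (k * (k - 1) / M) := by
  have hsum : ∑ j ∈ range k, 2 * (j : ℝ) / M = k * (k - 1) / M := by
    induction k with
    | zero => simp
    | succ k ih => rw [sum_range_succ, ih]; push_cast; ring
  have hfactor : ∀ j ∈ range k, (M + 2 * j) / (N + 2 * j) ≤ M / N * exp (2 * j / M) :=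
    fun j _ => calc
      (M + 2 * j) / (N + 2 * j) ≤ (M + 2 * j) / N := by gcongr; simp
      _ = M / N * (2 * j / M + 1) := by field_simp; ring
      _ ≤ M / N * exp (2 * j / M) := by gcongr; exact add_one_le_exp _
  calc _ ≤ ∏ j ∈ range k, M / N * exp (2 * j / M) :=
        prod_le_prod (fun j _ => by positivity) hfactor
    _ = _ := by rw [prod_mul_distrib, prod_const, card_range, ← exp_sum, hsum]

theorem exists_prod_add_div_add_le {M N ε : ℝ} (hM : 0 < M) (hN : 0 < N) (hε : 0 ≤ ε)
    (hε1 : ε ≤ 1) :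
    ∃ k : ℕ, ∏ j ∈ range k, (M + 2 * j) / (N + 2 * j)
      ≤ ((1 + ε) * (M / N)) ^ k * exp (-(M * ε ^ 2) / 12) := by
  set L := log (1 + ε)
  have hL : 2 * ε / 3 ≤ L := calc
    2 * ε / 3 ≤ 2 * ε / (ε + 2) := by gcongr; linarith
    _ ≤ L := le_log_one_add_of_nonneg hε
  have hL0 : 0 ≤ L := by linarith
  obtain ⟨k, hk⟩ := exists_nat_mul_sub_one_le (a := M * L / 2) (by positivity)
  have hexp : (k : ℝ) * (k - 1) / M ≤ k * L + -(M * ε ^ 2) / 12 := by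
    rw [div_le_iff₀ hM]
    have hL2 : (2 * ε / 3) ^ 2 ≤ L ^ 2 := pow_le_pow_left₀ (by positivity) hL 2
    nlinarith [mul_le_mul_of_nonneg_left hL2 (sq_nonneg M), sq_nonneg (M * ε)]
  refine ⟨k, (prod_add_div_add_le_pow_mul_exp hM hN k).trans ?_⟩
  calc (M / N) ^ k * exp (k * (k - 1) / M) ≤ (M / N) ^ k * exp (k * L + -(M * ε ^ 2) / 12) := by
        gcongr
    _ = _ := by
        rw [exp_add, exp_nat_mul, exp_log (by linarith), mul_pow]
        ring

section PlaneRotation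

variable {ι : Type*} [DecidableEq ι] {i j : ι}

noncomputable def planeRotationLinear (i j : ι) (θ : ℝ) :
    EuclideanSpace ℝ ι →ₗ[ℝ] EuclideanSpace ℝ ι where
  toFun o := WithLp.toLp 2 fun l =>
    if l = i then cos θ * o i - sin θ * o j
    else if l = j then sin θ * o i + cos θ * o j else o l
  map_add' o o' := by ext l; simp only [PiLp.add_apply]; split_ifs <;> ring
  map_smul' c o := by
    ext l
    simp only [PiLp.smul_apply, smul_eq_mul, RingHom.id_apply]
    split_ifs <;> ring

theorem planeRotationLinear_apply (θ : ℝ) (o : EuclideanSpace ℝ ι) (l : ι) :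
    planeRotationLinear i j θ o l = if l = i then cos θ * o i - sin θ * o j
      else if l = j then sin θ * o i + cos θ * o j else o l := rfl

variable [Fintype ι]

theorem norm_planeRotationLinear (hij : i ≠ j) (θ : ℝ) (o : EuclideanSpace ℝ ι) :
    ‖planeRotationLinear i j θ o‖ = ‖o‖ := by
  refine (sq_eq_sq₀ (norm_nonneg _) (norm_nonneg _)).1 ?_
  rw [EuclideanSpace.real_norm_sq_eq, EuclideanSpace.real_norm_sq_eq, ← sub_eq_zero,
    ← sum_sub_distrib,
    Fintype.sum_eq_add i j hij fun l hl => by simp [planeRotationLinear_apply, hl.1, hl.2]]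
  simp only [planeRotationLinear_apply, if_true, if_neg hij.symm]
  linear_combination (o i ^ 2 + o j ^ 2) * sin_sq_add_cos_sq θ

noncomputable def planeRotation (hij : i ≠ j) (θ : ℝ) :
    EuclideanSpace ℝ ι ≃ₗᵢ[ℝ] EuclideanSpace ℝ ι :=
  LinearIsometry.toLinearIsometryEquiv
    ⟨planeRotationLinear i j θ, norm_planeRotationLinear hij θ⟩ rfl

theorem planeRotation_apply (hij : i ≠ j) (θ : ℝ) (o : EuclideanSpace ℝ ι) :
    planeRotation hij θ o = planeRotationLinear i j θ o := rfl

end PlaneRotation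

section SqNormOn

variable {ι : Type*}

noncomputable def sqNormOn (s : Finset ι) (o : EuclideanSpace ℝ ι) : ℝ := ∑ l ∈ s, o l ^ 2

theorem sqNormOn_nonneg (s : Finset ι) (o : EuclideanSpace ℝ ι) : 0 ≤ sqNormOn s o :=
  sum_nonneg fun _ _ => sq_nonneg _

@[fun_prop]
theorem continuous_sqNormOn (s : Finset ι) : Continuous (sqNormOn (ι := ι) s) := by
  unfold sqNormOn; fun_prop

/-- For `i ∈ s` and `j ∉ s`, the derivative at `θ = 0` of `o i * o j * sqNormOn s o ^ m`
along the rotation by `θ` in the `(i, j)`-plane. -/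
noncomputable def rotationTerm (s : Finset ι) (i j : ι) (m : ℕ) (o : EuclideanSpace ℝ ι) : ℝ :=
  (o i ^ 2 - o j ^ 2) * sqNormOn s o ^ m - 2 * m * (o i ^ 2 * o j ^ 2) * sqNormOn s o ^ (m - 1)

@[fun_prop]
theorem continuous_rotationTerm (s : Finset ι) (i j : ι) (m : ℕ) :
    Continuous (rotationTerm s i j m) := by
  unfold rotationTerm; fun_prop

variable [DecidableEq ι]

theorem sqNormOn_erase_add {s : Finset ι} {i : ι} (hi : i ∈ s) (o : EuclideanSpace ℝ ι) :
    sqNormOn (s.erase i) o + o i ^ 2 = sqNormOn s o :=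
  sum_erase_add _ _ hi

variable [Fintype ι]

theorem sqNormOn_add_sqNormOn_compl (s : Finset ι) (o : EuclideanSpace ℝ ι) :
    sqNormOn s o + sqNormOn sᶜ o = ‖o‖ ^ 2 := by
  rw [sqNormOn, sqNormOn, sum_add_sum_compl, EuclideanSpace.real_norm_sq_eq]

theorem sqNormOn_planeRotation {s : Finset ι} {i j : ι} (hi : i ∈ s) (hj : j ∉ s) (θ : ℝ)
    (o : EuclideanSpace ℝ ι) :
    sqNormOn s (planeRotation (ne_of_mem_of_not_mem hi hj) θ o)
      = sqNormOn (s.erase i) o + (cos θ * o i - sin θ * o j) ^ 2 := by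
  rw [sqNormOn, ← sum_erase_add _ _ hi, sqNormOn]
  congr 1
  · refine sum_congr rfl fun l hl => ?_
    have hlj : l ≠ j := fun h => hj (h ▸ mem_of_mem_erase hl)
    simp [planeRotation_apply, planeRotationLinear_apply, ne_of_mem_erase hl, hlj]
  · simp [planeRotation_apply, planeRotationLinear_apply]

end SqNormOn

section Sphere

variable {ι : Type*} [Fintype ι] [DecidableEq ι] {ν : Measure (EuclideanSpace ℝ ι)}

theorem integral_rotationTerm_eq_zero [IsFiniteMeasure ν]
    (hsphere : ∀ᵐ o ∂ν, o ∈ Metric.sphere 0 1)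
    (hrot : ∀ g : EuclideanSpace ℝ ι ≃ₗᵢ[ℝ] EuclideanSpace ℝ ι, ν.map g = ν)
    {s : Finset ι} {i j : ι} (hi : i ∈ s) (hj : j ∉ s) (m : ℕ) :
    ∫ o, rotationTerm s i j m o ∂ν = 0 := by
  have hij : i ≠ j := ne_of_mem_of_not_mem hi hj
  let u : ℝ → EuclideanSpace ℝ ι → ℝ := fun θ o => cos θ * o i - sin θ * o j
  let v : ℝ → EuclideanSpace ℝ ι → ℝ := fun θ o => sin θ * o i + cos θ * o j
  let w : ℝ → EuclideanSpace ℝ ι → ℝ := fun θ o => sqNormOn (s.erase i) o + u θ o ^ 2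
  let f : EuclideanSpace ℝ ι → ℝ := fun o => o i * o j * sqNormOn s o ^ m
  have hf : Continuous f := by fun_prop
  have hrotate : ∀ θ o, f (planeRotation hij θ o) = u θ o * v θ o * w θ o ^ m := fun θ o => by
    simp only [f, w, sqNormOn_planeRotation hi hj]
    simp [u, v, planeRotation_apply, planeRotationLinear_apply, hij.symm]
  have hconst : ∀ θ, ∫ o, u θ o * v θ o * w θ o ^ m ∂ν = ∫ o, f o ∂ν := fun θ => by
    have hg := (planeRotation hij θ).continuous.aemeasurable (μ := ν)
    simp_rw [← hrotate]
    rw [← integral_map hg (by rw [hrot]; exact hf.aestronglyMeasurable), hrot]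
  have hu : ∀ θ o, HasDerivAt (u · o) (-sin θ * o i - cos θ * o j) θ := fun θ o =>
    ((hasDerivAt_cos θ).mul_const (o i)).sub ((hasDerivAt_sin θ).mul_const (o j))
  have hv : ∀ θ o, HasDerivAt (v · o) (cos θ * o i + -sin θ * o j) θ := fun θ o =>
    ((hasDerivAt_sin θ).mul_const (o i)).add ((hasDerivAt_cos θ).mul_const (o j))
  have hw : ∀ θ o, HasDerivAt (w · o) (2 * u θ o * (-sin θ * o i - cos θ * o j)) θ :=
    fun θ o => (((hu θ o).pow 2).const_add _).congr_deriv (by push_cast; ring)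
  let F' : ℝ → EuclideanSpace ℝ ι → ℝ := fun θ o =>
    ((-sin θ * o i - cos θ * o j) * v θ o + u θ o * (cos θ * o i - sin θ * o j)) * w θ o ^ m
      + u θ o * v θ o * (m * w θ o ^ (m - 1) * (2 * u θ o * (-sin θ * o i - cos θ * o j)))
  have hderiv : ∀ θ o, HasDerivAt (fun θ => u θ o * v θ o * w θ o ^ m) (F' θ o) θ :=
    fun θ o => (((hu θ o).mul (hv θ o)).mul ((hw θ o).pow m)).congr_deriv
      (by simp only [F', Pi.mul_apply, Pi.pow_apply]; ring)
  have hzero := integral_deriv_eq_zero_of_integral_const (isCompact_sphere 0 1) hsphere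
    (by fun_prop) (by fun_prop) hderiv (fun θ => (hconst θ).trans (hconst 0).symm)
  rw [← hzero]
  refine integral_congr_ae (.of_forall fun o => ?_)
  simp only [rotationTerm, F', u, v, w, cos_zero, sin_zero, one_mul, zero_mul, sub_zero,
    neg_zero, zero_add, sqNormOn_erase_add hi]
  ring

theorem sum_sum_compl_rotationTerm {s : Finset ι} {o : EuclideanSpace ℝ ι} (ho : ‖o‖ = 1)
    (m : ℕ) :
    ∑ i ∈ s, ∑ j ∈ sᶜ, rotationTerm s i j m o
      = (Fintype.card ι + 2 * m) * sqNormOn s o ^ (m + 1) - (#s + 2 * m) * sqNormOn s o ^ m := by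
  set a := sqNormOn s o
  have hb : sqNormOn sᶜ o = 1 - a := by
    linarith [sqNormOn_add_sqNormOn_compl s o, ho ▸ one_pow 2]
  have hcard : ((#sᶜ : ℕ) : ℝ) = Fintype.card ι - #s := by
    rw [card_compl, Nat.cast_sub (card_le_univ s)]
  have hpow : (m : ℝ) * a ^ (m - 1) * a = m * a ^ m := by
    cases m <;> simp [pow_succ, mul_assoc]
  calc _ = #sᶜ * a * a ^ m - #s * sqNormOn sᶜ o * a ^ m
        - 2 * ((m : ℝ) * a ^ (m - 1) * a) * sqNormOn sᶜ o := by
        simp only [rotationTerm, sub_mul, sum_sub_distrib, ← sum_mul, ← mul_sum, sum_const,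
          nsmul_eq_mul, a, sqNormOn]
        ring
    _ = _ := by rw [hb, hcard, hpow]; ring

theorem sqNormOn_moment_recursion [IsFiniteMeasure ν] (hsphere : ∀ᵐ o ∂ν, o ∈ Metric.sphere 0 1)
    (hrot : ∀ g : EuclideanSpace ℝ ι ≃ₗᵢ[ℝ] EuclideanSpace ℝ ι, ν.map g = ν)
    (s : Finset ι) (m : ℕ) :
    (Fintype.card ι + 2 * m) * ∫ o, sqNormOn s o ^ (m + 1) ∂ν
      = (#s + 2 * m) * ∫ o, sqNormOn s o ^ m ∂ν := by
  have hint : ∀ {f : EuclideanSpace ℝ ι → ℝ}, Continuous f → Integrable f ν :=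
    fun hf => hf.integrable_of_ae_mem_compact (isCompact_sphere 0 1) hsphere
  have hzero : ∫ o, ∑ i ∈ s, ∑ j ∈ sᶜ, rotationTerm s i j m o ∂ν = 0 := by
    rw [integral_finsetSum _ fun i _ => hint (by fun_prop)]
    refine sum_eq_zero fun i hi => ?_
    rw [integral_finsetSum _ fun j _ => hint (by fun_prop)]
    exact sum_eq_zero fun j hj =>
      integral_rotationTerm_eq_zero hsphere hrot hi (mem_compl.1 hj) m
  rw [integral_congr_ae (hsphere.mono fun o ho =>
      sum_sum_compl_rotationTerm (mem_sphere_zero_iff_norm.1 ho) m),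
    integral_sub (hint (by fun_prop)) (hint (by fun_prop)), integral_const_mul,
    integral_const_mul, sub_eq_zero] at hzero
  exact hzero

theorem integral_sqNormOn_pow [IsProbabilityMeasure ν] [Nonempty ι]
    (hsphere : ∀ᵐ o ∂ν, o ∈ Metric.sphere 0 1)
    (hrot : ∀ g : EuclideanSpace ℝ ι ≃ₗᵢ[ℝ] EuclideanSpace ℝ ι, ν.map g = ν)
    (s : Finset ι) (k : ℕ) :
    ∫ o, sqNormOn s o ^ k ∂ν = ∏ j ∈ range k, (#s + 2 * j : ℝ) / (Fintype.card ι + 2 * j) := by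
  induction k with
  | zero => simp
  | succ k ih =>
    have hpos : (0 : ℝ) < Fintype.card ι + 2 * k := by positivity
    rw [prod_range_succ, ← ih, mul_div_assoc', eq_div_iff hpos.ne']
    linear_combination sqNormOn_moment_recursion hsphere hrot s k

theorem measureReal_le_sqNormOn_le_exp [IsProbabilityMeasure ν]
    (hsphere : ∀ᵐ o ∂ν, o ∈ Metric.sphere 0 1)
    (hrot : ∀ g : EuclideanSpace ℝ ι ≃ₗᵢ[ℝ] EuclideanSpace ℝ ι, ν.map g = ν)
    {s : Finset ι} (hs : s.Nonempty) {ε : ℝ} (hε : 0 ≤ ε) (hε1 : ε ≤ 1) :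
    ν.real {o | (1 + ε) * (#s / Fintype.card ι) ≤ sqNormOn s o}
      ≤ exp (-(#s * ε ^ 2) / 12) := by
  have : Nonempty ι := ⟨hs.choose⟩
  obtain ⟨k, hk⟩ := exists_prod_add_div_add_le (M := #s) (N := Fintype.card ι)
    (by simpa using hs.card_pos) (by simpa using Fintype.card_pos) hε hε1
  set r := (1 + ε) * (#s / Fintype.card ι : ℝ)
  have hr : 0 < r := by have := hs.card_pos; positivity
  have hmarkov := mul_meas_ge_le_integral_of_nonneg
    (.of_forall fun o => pow_nonneg (sqNormOn_nonneg s o) k)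
    ((continuous_sqNormOn s).pow k |>.integrable_of_ae_mem_compact (isCompact_sphere 0 1) hsphere)
    (r ^ k)
  rw [integral_sqNormOn_pow hsphere hrot s k] at hmarkov
  refine le_of_mul_le_mul_left ?_ (pow_pos hr k)
  calc r ^ k * ν.real {o | r ≤ sqNormOn s o}
      ≤ r ^ k * ν.real {o | r ^ k ≤ sqNormOn s o ^ k} := by
        refine mul_le_mul_of_nonneg_left (measureReal_mono fun o ho => ?_) (by positivity)
        exact pow_le_pow_left₀ hr.le ho k
    _ ≤ _ := hmarkov.trans hk

end Sphere

theorem random_projection_upper_tail_general {M N : ℕ} (hMN : M ≤ N)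
    {Ω : Type*} [MeasurableSpace Ω] (μ : Measure Ω) [IsProbabilityMeasure μ]
    (P : Ω → (EuclideanSpace ℝ (Fin N) →ₗ[ℝ] EuclideanSpace ℝ (Fin N)))
    (v : EuclideanSpace ℝ (Fin N)) (hv : v ≠ 0)
    (ν : Measure (EuclideanSpace ℝ (Fin N))) (hν : IsUniformOnUnitSphere ν)
    (hmeas : Measurable fun ω => ‖P ω v‖)
    (hlaw : Measure.map (fun ω => ‖P ω v‖) μ
          = Measure.map (fun o => ‖v‖ * normFirstCoords M hMN o) ν)
    (ε : ℝ) (hε : 0 < ε) (hε1 : ε < 1) :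
    (μ {ω | ‖P ω v‖ ≥ Real.sqrt (1 + ε) * Real.sqrt ((M : ℝ) / N) * ‖v‖}).toReal
      ≤ Real.exp (-(M * ε ^ 2) / 12) := by
  obtain ⟨hprob, hsphere, hrot⟩ := hν
  rcases M.eq_zero_or_pos with rfl | hM
  · simp
  set s := univ.map (Fin.castLEEmb hMN)
  have hs : #s = M := by simp [s]
  have hnorm : normFirstCoords M hMN = fun o => √(sqNormOn s o) := by
    ext o
    simp [normFirstCoords, sqNormOn, s]
  have hevent : ∀ o, √(1 + ε) * √(M / N) * ‖v‖ ≤ ‖v‖ * √(sqNormOn s o)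
      ↔ (1 + ε) * (#s / N) ≤ sqNormOn s o := fun o => by
    rw [← sqrt_mul (by positivity), mul_comm ‖v‖, mul_le_mul_iff_of_pos_right (norm_pos_iff.2 hv),
      sqrt_le_sqrt_iff (sqNormOn_nonneg s o), hs]
  simp only [hnorm] at hlaw
  calc (μ {ω | ‖P ω v‖ ≥ √(1 + ε) * √(M / N) * ‖v‖}).toReal
      = ν.real {o | (1 + ε) * (#s / Fintype.card (Fin N)) ≤ sqNormOn s o} := by
        simp_rw [← measureReal_def, Fintype.card_fin, ← hevent]
        change μ.real ((fun ω => ‖P ω v‖) ⁻¹' Set.Ici _)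
          = ν.real ((fun o => ‖v‖ * √(sqNormOn s o)) ⁻¹' Set.Ici _)
        rw [← map_measureReal_apply hmeas measurableSet_Ici, hlaw,
          map_measureReal_apply (by fun_prop) measurableSet_Ici]
    _ ≤ exp (-(#s * ε ^ 2) / 12) := measureReal_le_sqNormOn_le_exp
          (ae_iff.2 (by simpa using hsphere)) hrot (card_pos.1 (hs ▸ hM)) hε.le hε1.le
    _ = exp (-(M * ε ^ 2) / 12) := by rw [hs]

/-- upper-tail concentration for a uniformly random rank-`M` orthogonal
projection `P` of `ℝ^N` applied to a fixed nonzero vector `v`: the randomness of the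
projection is expressed by the fact that `‖Pv‖` is distributed as `‖v‖` times the norm of
the first `M` coordinates of a uniformly random unit vector. Then
`ℙ(‖Pv‖ ≥ √(1+ε)·√(M/N)·‖v‖) ≤ exp(−Mε²/12)`. -/
theorem random_projection_upper_tail {M N : ℕ} (hMN : M ≤ N)
    {Ω : Type*} [MeasurableSpace Ω] (μ : Measure Ω) [IsProbabilityMeasure μ]
    (P : Ω → (EuclideanSpace ℝ (Fin N) →ₗ[ℝ] EuclideanSpace ℝ (Fin N)))
    (hproj : ∀ ω, IsOrthogonalProjection (P ω) ∧
      Module.finrank ℝ (LinearMap.range (P ω)) = M)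
    (v : EuclideanSpace ℝ (Fin N)) (hv : v ≠ 0)
    (ν : Measure (EuclideanSpace ℝ (Fin N))) (hν : IsUniformOnUnitSphere ν)
    (hmeas : Measurable fun ω => ‖P ω v‖)
    (hlaw : Measure.map (fun ω => ‖P ω v‖) μ
          = Measure.map (fun o => ‖v‖ * normFirstCoords M hMN o) ν)
    (ε : ℝ) (hε : 0 < ε) (hε1 : ε < 1) :
    (μ {ω | ‖P ω v‖ ≥ Real.sqrt (1 + ε) * Real.sqrt ((M : ℝ) / N) * ‖v‖}).toReal
      ≤ Real.exp (-(M * ε ^ 2) / 12) :=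
  random_projection_upper_tail_general hMN μ P v hv ν hν hmeas hlaw ε hε hε1
end

section
/- Let A ∈ ℝ^{M×N} with M ≤ N and full row rank, with row-space projection P = A†A. Fix x ∈ ℝ^N, a codeword c_i ∈ ℝ^N, and r > 0 with ‖P(c_i − x)‖₂ > r. Then there exists a perturbation w with ‖w‖₂ = ‖P(c_i − x)‖₂ − r and a point t with ‖t − c_i‖₂ ≤ r such that A(x + w) = A t. (Hence a targeted attack of magnitude ‖P(c_i − x)‖₂ − r suffices to make the compressed statistic A(x+w) coincide with that of a point in the ball around c_i.) -/
/-- Moore–Penrose pseudoinverse of a full-row-rank matrix: `A† = Aᵀ (A Aᵀ)⁻¹`. -/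
noncomputable def moorePenrosePinv {M N : ℕ} (A : Matrix (Fin M) (Fin N) ℝ) :
    Matrix (Fin N) (Fin M) ℝ :=
  A.transpose * (A * A.transpose)⁻¹

/-!
Write `u = P (cᵢ - x)`. Since `A A† = 1`, the projection `P = A† A` satisfies `A P = A`, so
`A u = A (cᵢ - x)`. Split `u = w + s` along its own direction with `‖s‖ = r` and
`‖w‖ = ‖u‖ - r`; then `t = cᵢ - s` lies in the ball and
`A (x + w) = A x + A u - A s = A cᵢ - A s = A t`.
-/

theorem Matrix.isUnit_of_rank_eq_card {n K : Type*} [Fintype n] [DecidableEq n] [Field K]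
    {B : Matrix n n K} (h : B.rank = Fintype.card n) : IsUnit B := by
  rw [← Matrix.mulVec_surjective_iff_isUnit, ← Matrix.coe_mulVecLin, ← LinearMap.range_eq_top]
  exact Submodule.eq_top_of_finrank_eq (by simpa [Matrix.rank] using h)

theorem mul_moorePenrosePinv {M N : ℕ} {A : Matrix (Fin M) (Fin N) ℝ} (hrank : A.rank = M) :
    A * moorePenrosePinv A = 1 := by
  have hgram : IsUnit (A * A.transpose) :=
    Matrix.isUnit_of_rank_eq_card (by rw [Matrix.rank_self_mul_transpose, hrank, Fintype.card_fin])
  rw [moorePenrosePinv, ← Matrix.mul_assoc,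
    Matrix.mul_nonsing_inv _ ((Matrix.isUnit_iff_isUnit_det _).mp hgram)]

theorem exists_add_eq_norm_sub_norm_eq {E : Type*} [NormedAddCommGroup E] [NormedSpace ℝ E]
    {u : E} {r : ℝ} (hr : 0 ≤ r) (hru : r ≤ ‖u‖) :
    ∃ w s : E, w + s = u ∧ ‖w‖ = ‖u‖ - r ∧ ‖s‖ = r := by
  rcases eq_or_ne u 0 with rfl | hu
  · obtain rfl : r = 0 := le_antisymm (by simpa using hru) hr
    exact ⟨0, 0, by simp, by simp, by simp⟩
  have hu' : 0 < ‖u‖ := norm_pos_iff.mpr hu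
  have hscale : 0 ≤ r / ‖u‖ ∧ r / ‖u‖ ≤ 1 := ⟨by positivity, (div_le_one hu').mpr hru⟩
  refine ⟨(1 - r / ‖u‖) • u, (r / ‖u‖) • u, by module, ?_, ?_⟩
  · rw [norm_smul_of_nonneg (by linarith), sub_mul, one_mul, div_mul_cancel₀ _ hu'.ne']
  · rw [norm_smul_of_nonneg hscale.1, div_mul_cancel₀ _ hu'.ne']

theorem exists_attack_of_map_eq {E F : Type*} [NormedAddCommGroup E] [NormedSpace ℝ E]
    [AddCommGroup F] [Module ℝ F] (A : E →ₗ[ℝ] F) {x c u : E} {r : ℝ} (hAu : A u = A (c - x))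
    (hr : 0 ≤ r) (hru : r ≤ ‖u‖) :
    ∃ w t : E, ‖w‖ = ‖u‖ - r ∧ ‖t - c‖ ≤ r ∧ A (x + w) = A t := by
  obtain ⟨w, s, rfl, hw, hs⟩ := exists_add_eq_norm_sub_norm_eq hr hru
  refine ⟨w, c - s, hw, by simp [hs], ?_⟩
  rw [map_add] at hAu
  rw [map_add, map_sub, eq_sub_iff_add_eq, add_assoc, hAu, map_sub, add_sub_cancel]

theorem targeted_attack_of_size_proj_dist_general {M N : ℕ}
    (A : Matrix (Fin M) (Fin N) ℝ) (hrank : A.rank = M)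
    (P : EuclideanSpace ℝ (Fin N) →ₗ[ℝ] EuclideanSpace ℝ (Fin N))
    (hP : P = Matrix.toEuclideanLin (moorePenrosePinv A * A))
    (x ci : EuclideanSpace ℝ (Fin N)) (r : ℝ) (hr : 0 < r)
    (hfar : ‖P (ci - x)‖ > r) :
    ∃ (w t : EuclideanSpace ℝ (Fin N)),
      ‖w‖ = ‖P (ci - x)‖ - r ∧ ‖t - ci‖ ≤ r ∧
      Matrix.toEuclideanLin A (x + w) = Matrix.toEuclideanLin A t := by
  have hAP : Matrix.toEuclideanLin A ∘ₗ P = Matrix.toEuclideanLin A := by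
    rw [hP, ← Matrix.toLpLin_mul_same, ← Matrix.mul_assoc, mul_moorePenrosePinv hrank,
      Matrix.one_mul]
  exact exists_attack_of_map_eq _ (LinearMap.congr_fun hAP (ci - x)) hr.le hfar.le

/-- if `‖P(c_i − x)‖ > r`, there is a targeted attack `w` of magnitude exactly
`‖P(c_i − x)‖ − r` and a point `t` of the ball `B(c_i, r)` with `A(x + w) = A t`. -/
theorem targeted_attack_of_size_proj_dist {M N : ℕ} (hMN : M ≤ N)
    (A : Matrix (Fin M) (Fin N) ℝ) (hrank : A.rank = M)
    (P : EuclideanSpace ℝ (Fin N) →ₗ[ℝ] EuclideanSpace ℝ (Fin N))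
    (hP : P = Matrix.toEuclideanLin (moorePenrosePinv A * A))
    (x ci : EuclideanSpace ℝ (Fin N)) (r : ℝ) (hr : 0 < r)
    (hfar : ‖P (ci - x)‖ > r) :
    ∃ (w t : EuclideanSpace ℝ (Fin N)),
      ‖w‖ = ‖P (ci - x)‖ - r ∧ ‖t - ci‖ ≤ r ∧
      Matrix.toEuclideanLin A (x + w) = Matrix.toEuclideanLin A t :=
  targeted_attack_of_size_proj_dist_general A hrank P hP x ci r hr hfar
end
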